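/- Let Pr_T(x) be a provability predicate of T satisfying condition D2, and let Θ and Γ be classes of formulas such that every sentence Pr_T(⌜φ⌝) is in Θ(T), Θ(T) ⊆ Γ(T), and Γ(T) is closed under taking disjunction. Then T + Rfn(Pr_T) is Γ-conservative over T + Rfn_Γ(Pr_T). -/

import Mathlib

/-
Self-contained formalization of the background theory (following Kurahashi–?,
"local reflection principles and Rosser provability predicates").

We work with the first-order language of arithmetic `LA` (0, S, +, ·, ≤),
deeply embedded via Mathlib's `FirstOrder.Language` framework.

* Provability `Prv T φ` is rendered as semantic consequence `T ⊨ᵇ φ`, which by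
  the Gödel completeness theorem coincides with provability in first-order logic.
* `PAAxioms` is Peano Arithmetic: the basic axioms together with the full
  induction scheme.
* A "formula" (possibly with free variables) is an element of
  `AFml := Σ n, LA.BoundedFormula Empty n` (free variables are de Bruijn style);
  a sentence is a formula with `n = 0`.
* `gnum` is a fixed (injective) Gödel numbering of formulas; `⌜φ⌝` is rendered
  as `numeral (gnum ⟨n, φ⟩)`.
* The arithmetical hierarchy `IsDelta0`, `IsSigma n`, `IsPi n` is defined
  exactly as in the paper (Σ₀ = Π₀ = bounded-quantifier formulas, and the
  inductive clauses for Σ_{n+1}, Π_{n+1}).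
* Witness comparison `WLt` (≺) and `WLe` (≼) are defined literally.
* A proof predicate of `T` is a Δ₁(PA) formula `Prf(x, y)` such that
  `T ⊢ φ iff ℕ ⊨ ∃y Prf(⌜φ⌝, y)` and PA proves that each proof proves a
  unique formula ("single conclusion", formulated via uniqueness).
* `ProvS Prf φ` is the sentence `∃y Prf(⌜φ⌝, y)` and `RosserS Prf φ` is the
  Rosser sentence `Prv(⌜φ⌝) ≺ Prv(⌜¬φ⌝)`.
* `IsCanonicalProvability T P` captures the properties of Gödel's canonical
  proof predicate used in the paper: it is a proof predicate whose provability
  predicate satisfies the Hilbert–Bernays–Löb derivability conditions and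
  formalized Σ₁-completeness.  (This also encodes that `T` is recursively
  axiomatized.)
-/

open FirstOrder Language

/-! ### The language of arithmetic -/

inductive ArithFunc : ℕ → Type
  | zero : ArithFunc 0
  | succ : ArithFunc 1
  | add : ArithFunc 2
  | mul : ArithFunc 2

inductive ArithRel : ℕ → Type
  | le : ArithRel 2

abbrev LA : Language := ⟨ArithFunc, ArithRel⟩

def funcCode : (Σ l, ArithFunc l) → ℕ
  | ⟨_, .zero⟩ => 0
  | ⟨_, .succ⟩ => 1
  | ⟨_, .add⟩ => 2
  | ⟨_, .mul⟩ => 3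

instance : Countable ((l : ℕ) × LA.Functions l) :=
  ⟨⟨funcCode, by rintro ⟨l₁, f₁⟩ ⟨l₂, f₂⟩ h; cases f₁ <;> cases f₂ <;> simp_all [funcCode]⟩⟩

instance : Countable ((l : ℕ) × LA.Relations l) :=
  ⟨⟨fun _ => 0, by rintro ⟨l₁, r₁⟩ ⟨l₂, r₂⟩ _; cases r₁; cases r₂; rfl⟩⟩

/-- The standard model ℕ of arithmetic. -/
instance : LA.Structure ℕ where
  funMap {n} f v :=
    match f with
    | .zero => 0
    | .succ => v 0 + 1
    | .add => v 0 + v 1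
    | .mul => v 0 * v 1
  RelMap {n} r v :=
    match r with
    | .le => v 0 ≤ v 1

/-! ### Terms -/

def zeroT {α : Type} : LA.Term α := Constants.term ArithFunc.zero

def sT {α : Type} (t : LA.Term α) : LA.Term α := Functions.apply₁ ArithFunc.succ t

def addT {α : Type} (t u : LA.Term α) : LA.Term α := Functions.apply₂ ArithFunc.add t u

def mulT {α : Type} (t u : LA.Term α) : LA.Term α := Functions.apply₂ ArithFunc.mul t u

/-- The numeral `n̄`. -/
def numeral {α : Type} : ℕ → LA.Term α
  | 0 => zeroT
  | n + 1 => sT (numeral n)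

/-- The atomic formula `t ≤ u`. -/
def leF {α : Type} {n : ℕ} (t u : LA.Term (α ⊕ Fin n)) : LA.BoundedFormula α n :=
  Relations.boundedFormula₂ ArithRel.le t u

/-! ### Provability (via the completeness theorem, as semantic consequence) -/

/-- `Prv T φ` : the theory `T` proves the formula `φ` (free variables read
universally).  By Gödel's completeness theorem this coincides with provability
in first-order logic.  -/
def Prv {α : Type} {n : ℕ} (T : LA.Theory) (φ : LA.BoundedFormula α n) : Prop :=
  T ⊨ᵇ φ

/-! ### Peano Arithmetic -/

/-- Substitute the term `t` (over the remaining `k` variables) for the last de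
Bruijn variable of `φ`. -/
def substLastK {k : ℕ} (φ : LA.BoundedFormula Empty (k + 1))
    (t : LA.Term (Empty ⊕ Fin k)) : LA.BoundedFormula Empty k :=
  (φ.toFormula.subst
    (Sum.elim (fun e => e.elim)
      (fun j : Fin (k + 1) =>
        if h : (j : ℕ) < k then Term.var (Sum.inr ⟨j, h⟩) else t))).relabel id

/-- Substitute the term `t` (over all `k+1` variables) for the last de Bruijn
variable of `φ`. -/
def substLastS {k : ℕ} (φ : LA.BoundedFormula Empty (k + 1))
    (t : LA.Term (Empty ⊕ Fin (k + 1))) : LA.BoundedFormula Empty (k + 1) :=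
  (φ.toFormula.subst
    (Sum.elim (fun e => e.elim)
      (fun j : Fin (k + 1) =>
        if (j : ℕ) < k then Term.var (Sum.inr j) else t))).relabel id

/-- The induction axiom for `φ(x, y₁, …, y_k)`:
`∀ȳ (φ(0, ȳ) ∧ ∀x(φ(x, ȳ) → φ(Sx, ȳ)) → ∀x φ(x, ȳ))`. -/
def indAx (k : ℕ) (φ : LA.BoundedFormula Empty (k + 1)) : LA.Sentence :=
  BoundedFormula.alls
    ((substLastK φ zeroT ⊓
        ∀' (φ ⟹ substLastS φ (sT (Term.var (Sum.inr (Fin.last k)))))) ⟹ ∀' φ)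

/-- The finitely many basic axioms of PA. -/
def PABase : LA.Theory :=
  { ∀' ∼(sT &0 =' zeroT),
    ∀' ∀' ((sT &0 =' sT &1) ⟹ (&0 =' &1)),
    ∀' (addT &0 zeroT =' &0),
    ∀' ∀' (addT &0 (sT &1) =' sT (addT &0 &1)),
    ∀' (mulT &0 zeroT =' zeroT),
    ∀' ∀' (mulT &0 (sT &1) =' addT (mulT &0 &1) &0),
    ∀' ∀' (leF &0 &1 ⇔ ∃' (addT &2 &0 =' &1)) }

/-- Peano Arithmetic: basic axioms plus full induction. -/
def PAAxioms : LA.Theory :=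
  PABase ∪ { s | ∃ (k : ℕ) (φ : LA.BoundedFormula Empty (k + 1)), s = indAx k φ }

/-! ### The arithmetical hierarchy -/

/-- Δ₀(=Σ₀=Π₀) formulas: every quantifier is bounded. -/
inductive IsDelta0 {α : Type} : {n : ℕ} → LA.BoundedFormula α n → Prop
  | falsum {n : ℕ} : IsDelta0 (⊥ : LA.BoundedFormula α n)
  | equal {n : ℕ} (t u : LA.Term (α ⊕ Fin n)) : IsDelta0 (t.bdEqual u)
  | rel {n l : ℕ} (R : LA.Relations l) (ts : Fin l → LA.Term (α ⊕ Fin n)) :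
      IsDelta0 (R.boundedFormula ts)
  | not {n : ℕ} {φ : LA.BoundedFormula α n} : IsDelta0 φ → IsDelta0 (∼φ)
  | and {n : ℕ} {φ ψ : LA.BoundedFormula α n} : IsDelta0 φ → IsDelta0 ψ → IsDelta0 (φ ⊓ ψ)
  | or {n : ℕ} {φ ψ : LA.BoundedFormula α n} : IsDelta0 φ → IsDelta0 ψ → IsDelta0 (φ ⊔ ψ)
  | imp {n : ℕ} {φ ψ : LA.BoundedFormula α n} : IsDelta0 φ → IsDelta0 ψ → IsDelta0 (φ ⟹ ψ)
  | bdAll {n : ℕ} (t : LA.Term (α ⊕ Fin n)) {φ : LA.BoundedFormula α (n + 1)} :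
      IsDelta0 φ →
      IsDelta0 (∀' (leF (Term.var (Sum.inr (Fin.last n)))
        (t.relabel (Sum.map id Fin.castSucc)) ⟹ φ))
  | bdEx {n : ℕ} (t : LA.Term (α ⊕ Fin n)) {φ : LA.BoundedFormula α (n + 1)} :
      IsDelta0 φ →
      IsDelta0 (∃' (leF (Term.var (Sum.inr (Fin.last n)))
        (t.relabel (Sum.map id Fin.castSucc)) ⊓ φ))

mutual
  /-- The class Σ_k of arithmetical formulas (as defined in the paper). -/
  inductive IsSigma {α : Type} : ℕ → {n : ℕ} → LA.BoundedFormula α n → Prop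
    | delta0 {n : ℕ} {φ : LA.BoundedFormula α n} : IsDelta0 φ → IsSigma 0 φ
    | ofSigma {k n : ℕ} {φ : LA.BoundedFormula α n} : IsSigma k φ → IsSigma (k + 1) φ
    | ofPi {k n : ℕ} {φ : LA.BoundedFormula α n} : IsPi k φ → IsSigma (k + 1) φ
    | and {k n : ℕ} {φ ψ : LA.BoundedFormula α n} :
        IsSigma (k + 1) φ → IsSigma (k + 1) ψ → IsSigma (k + 1) (φ ⊓ ψ)
    | or {k n : ℕ} {φ ψ : LA.BoundedFormula α n} :
        IsSigma (k + 1) φ → IsSigma (k + 1) ψ → IsSigma (k + 1) (φ ⊔ ψ)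
    | ex {k n : ℕ} {φ : LA.BoundedFormula α (n + 1)} :
        IsSigma (k + 1) φ → IsSigma (k + 1) (∃' φ)
    | not {k n : ℕ} {φ : LA.BoundedFormula α n} : IsPi (k + 1) φ → IsSigma (k + 1) (∼φ)
    | imp {k n : ℕ} {φ ψ : LA.BoundedFormula α n} :
        IsPi (k + 1) φ → IsSigma (k + 1) ψ → IsSigma (k + 1) (φ ⟹ ψ)

  /-- The class Π_k of arithmetical formulas (as defined in the paper). -/
  inductive IsPi {α : Type} : ℕ → {n : ℕ} → LA.BoundedFormula α n → Prop
    | delta0 {n : ℕ} {φ : LA.BoundedFormula α n} : IsDelta0 φ → IsPi 0 φ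
    | ofSigma {k n : ℕ} {φ : LA.BoundedFormula α n} : IsSigma k φ → IsPi (k + 1) φ
    | ofPi {k n : ℕ} {φ : LA.BoundedFormula α n} : IsPi k φ → IsPi (k + 1) φ
    | and {k n : ℕ} {φ ψ : LA.BoundedFormula α n} :
        IsPi (k + 1) φ → IsPi (k + 1) ψ → IsPi (k + 1) (φ ⊓ ψ)
    | or {k n : ℕ} {φ ψ : LA.BoundedFormula α n} :
        IsPi (k + 1) φ → IsPi (k + 1) ψ → IsPi (k + 1) (φ ⊔ ψ)
    | all {k n : ℕ} {φ : LA.BoundedFormula α (n + 1)} :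
        IsPi (k + 1) φ → IsPi (k + 1) (∀' φ)
    | not {k n : ℕ} {φ : LA.BoundedFormula α n} : IsSigma (k + 1) φ → IsPi (k + 1) (∼φ)
    | imp {k n : ℕ} {φ ψ : LA.BoundedFormula α n} :
        IsSigma (k + 1) φ → IsPi (k + 1) ψ → IsPi (k + 1) (φ ⟹ ψ)
end

/-- The set of Σ_n sentences. -/
def SigmaClass (n : ℕ) : Set LA.Sentence := { φ | IsSigma n φ }

/-- The set of Π_n sentences. -/
def PiClass (n : ℕ) : Set LA.Sentence := { φ | IsPi n φ }

/-- `Γ ∈ {Σ_n, Π_n | n ≥ 1}`. -/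
def IsLevel (Γ : Set LA.Sentence) : Prop :=
  ∃ n, 1 ≤ n ∧ (Γ = SigmaClass n ∨ Γ = PiClass n)

/-- `(Γ, Γᵈ)` is a dual pair from `{Σ_n, Π_n | n ≥ 1}`. -/
def DualPair (Γ Γd : Set LA.Sentence) : Prop :=
  ∃ n, 1 ≤ n ∧ ((Γ = SigmaClass n ∧ Γd = PiClass n) ∨ (Γ = PiClass n ∧ Γd = SigmaClass n))

/-- Boolean combinations of Σ₁ sentences. -/
inductive IsBSigma1 : LA.Sentence → Prop
  | base {φ : LA.Sentence} : IsSigma 1 φ → IsBSigma1 φ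
  | not {φ : LA.Sentence} : IsBSigma1 φ → IsBSigma1 (∼φ)
  | and {φ ψ : LA.Sentence} : IsBSigma1 φ → IsBSigma1 ψ → IsBSigma1 (φ ⊓ ψ)
  | or {φ ψ : LA.Sentence} : IsBSigma1 φ → IsBSigma1 ψ → IsBSigma1 (φ ⊔ ψ)
  | imp {φ ψ : LA.Sentence} : IsBSigma1 φ → IsBSigma1 ψ → IsBSigma1 (φ ⟹ ψ)

/-- The class B(Σ₁) of Boolean combinations of Σ₁ sentences. -/
def BSigma1Class : Set LA.Sentence := { φ | IsBSigma1 φ }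

/-! ### Formulas and Gödel numbering -/

/-- The type of L_A-formulas: a formula with `n` (de Bruijn style) free
variables is an element of `LA.BoundedFormula Empty n`; sentences are the
formulas with `n = 0`. -/
abbrev AFml : Type := Σ n : ℕ, LA.BoundedFormula Empty n

/-- Negation of a formula. -/
def Fneg (F : AFml) : AFml := ⟨F.1, ∼F.2⟩

instance : Countable AFml :=
  Function.Injective.countable BoundedFormula.listEncode_sigma_injective

/-- A fixed injective Gödel numbering of formulas. -/
noncomputable def gnum : AFml → ℕ := (nonempty_embedding_nat AFml).some

/-! ### Witness comparison -/

/-- `(∃x φ) ≺ (∃x ψ)  :≡  ∃x (φ(x) ∧ ∀y ≤ x ¬ψ(y))`. -/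
def WLt {α : Type} (φ ψ : LA.BoundedFormula α 1) : LA.BoundedFormula α 0 :=
  ∃' (φ ⊓ ∀' (leF (Term.var (Sum.inr 1)) (Term.var (Sum.inr 0)) ⟹ ∼(ψ.liftAt 1 0)))

/-- `(∃x φ) ≼ (∃x ψ)  :≡  ∃x (φ(x) ∧ ∀y < x ¬ψ(y))`. -/
def WLe {α : Type} (φ ψ : LA.BoundedFormula α 1) : LA.BoundedFormula α 0 :=
  ∃' (φ ⊓ ∀' ((leF (Term.var (Sum.inr 1)) (Term.var (Sum.inr 0)) ⊓
      ∼(Term.bdEqual (Term.var (Sum.inr 1)) (Term.var (Sum.inr 0)))) ⟹ ∼(ψ.liftAt 1 0)))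

/-! ### Proof predicates, provability predicates and Rosser predicates -/

/-- Plug the terms `t`, `u` into the two free variables of the formula `P`. -/
def instF {n : ℕ} (P : LA.Formula (Fin 2)) (t u : LA.Term (Empty ⊕ Fin n)) :
    LA.BoundedFormula Empty n :=
  (P.subst ![t, u]).relabel id

/-- `Prf(c̄, y)` with `y` the remaining (de Bruijn) free variable. -/
noncomputable def PrfInst (P : LA.Formula (Fin 2)) (c : ℕ) : LA.BoundedFormula Empty 1 :=
  instF P (numeral c) (Term.var (Sum.inr 0))

/-- The sentence `∃y Prf(c̄, y)`. -/
noncomputable def ProvInst (P : LA.Formula (Fin 2)) (c : ℕ) : LA.Sentence :=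
  ∃' PrfInst P c

/-- `Pr(⌜F⌝)` for a formula `F`. -/
noncomputable def PrAt (P : LA.Formula (Fin 2)) (F : AFml) : LA.Sentence :=
  ProvInst P (gnum F)

/-- `Pr(⌜φ⌝)` for a sentence `φ`. -/
noncomputable def ProvS (P : LA.Formula (Fin 2)) (φ : LA.Sentence) : LA.Sentence :=
  PrAt P ⟨0, φ⟩

/-- The Rosser provability sentence `Pr(⌜F⌝) ≺ Pr(⌜¬F⌝)` associated with the
proof predicate `P`. -/
noncomputable def RosserAt (P : LA.Formula (Fin 2)) (F : AFml) : LA.Sentence :=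
  WLt (PrfInst P (gnum F)) (PrfInst P (gnum (Fneg F)))

/-- `Pr^R(⌜φ⌝)` for a sentence `φ`. -/
noncomputable def RosserS (P : LA.Formula (Fin 2)) (φ : LA.Sentence) : LA.Sentence :=
  RosserAt P ⟨0, φ⟩

/-- `∀y ∀x ∀x' (Prf(x, y) ∧ Prf(x', y) → x = x')` : each proof proves at most
one formula; together with `∃x Prf(x,y)` this is the single-conclusion
condition `∀y (∃x Prf(x,y) → ∃!x Prf(x,y))`. -/
def uniqueProofS (P : LA.Formula (Fin 2)) : LA.Sentence :=
  ∀' ∀' ∀' ((instF P (Term.var (Sum.inr 1)) (Term.var (Sum.inr 0)) ⊓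
      instF P (Term.var (Sum.inr 2)) (Term.var (Sum.inr 0))) ⟹
    Term.bdEqual (Term.var (Sum.inr 1)) (Term.var (Sum.inr 2)))

/-- The sentence `0 = 1`. -/
def zeroEqOne : LA.Sentence := Term.bdEqual (numeral 0) (numeral 1)

/-- The sentence `0 = 0`. -/
def zeroEqZero : LA.Sentence := Term.bdEqual (numeral 0) (numeral 0)

/-- `P` is a proof predicate of `T`: it is Δ₁(PA), it numerates the theorems of
`T` in ℕ, and provably in PA it is single-conclusion. -/
structure IsProofPredicate (T : LA.Theory) (P : LA.Formula (Fin 2)) : Prop where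
  sigma1 : IsSigma 1 P
  delta1 : ∃ π : LA.Formula (Fin 2), IsPi 1 π ∧ Prv PAAxioms (P ⇔ π)
  represents : ∀ φ : LA.Sentence, Prv T φ ↔ ℕ ⊨ ProvS P φ
  single_conclusion : Prv PAAxioms (uniqueProofS P)

/-- The consistency statement `Con_T := ¬Pr(⌜0=1⌝)`. -/
noncomputable def ConS (P : LA.Formula (Fin 2)) : LA.Sentence := ∼(ProvS P zeroEqOne)

/-- Iterated consistency: `Con⁰ := (0=0)`, `Con^{n+1} := ¬Pr(⌜¬Conⁿ⌝)`. -/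
noncomputable def ConIter (P : LA.Formula (Fin 2)) : ℕ → LA.Sentence
  | 0 => zeroEqZero
  | n + 1 => ∼(ProvS P (∼(ConIter P n)))

/-- Condition D2 for the predicate with instances `PrA`:
`U ⊢ Pr(⌜φ → ψ⌝) → (Pr(⌜φ⌝) → Pr(⌜ψ⌝))` for all formulas `φ, ψ`. -/
def CondD2 (U : LA.Theory) (PrA : AFml → LA.Sentence) : Prop :=
  ∀ (n : ℕ) (φ ψ : LA.BoundedFormula Empty n),
    Prv U (PrA ⟨n, φ ⟹ ψ⟩ ⟹ (PrA ⟨n, φ⟩ ⟹ PrA ⟨n, ψ⟩))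

/-- Condition C1: `T ⊢ ¬Con_T → Pr^R(⌜φ⌝) ∨ Pr^R(⌜¬φ⌝)` for all formulas `φ`
(`Con_T` is formulated with the canonical proof predicate `Pc`). -/
noncomputable def CondC1 (T : LA.Theory) (Pc : LA.Formula (Fin 2))
    (PrA : AFml → LA.Sentence) : Prop :=
  ∀ F : AFml, Prv T (∼(ConS Pc) ⟹ (PrA F ⊔ PrA (Fneg F)))

/-- Condition C2: `T ⊢ ¬(Pr^R(⌜φ⌝) ∧ Pr^R(⌜¬φ⌝))` for all formulas `φ`. -/
def CondC2 (T : LA.Theory) (PrA : AFml → LA.Sentence) : Prop :=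
  ∀ F : AFml, Prv T (∼(PrA F ⊓ PrA (Fneg F)))

/-- `P` is (a predicate with all the characteristic properties of) the
canonical proof predicate of `T`: a proof predicate whose provability
predicate satisfies the derivability conditions D1–D3 and formalized
Σ₁-completeness. -/
structure IsCanonicalProvability (T : LA.Theory) (P : LA.Formula (Fin 2)) : Prop where
  isProofPredicate : IsProofPredicate T P
  D1 : ∀ φ : LA.Sentence, Prv T φ → Prv T (ProvS P φ)
  D2 : CondD2 T (PrAt P)
  D3 : ∀ φ : LA.Sentence, Prv T (ProvS P φ ⟹ ProvS P (ProvS P φ))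
  sigma1_completeness : ∀ φ : LA.Sentence, IsSigma 1 φ → Prv T (φ ⟹ ProvS P φ)

/-! ### Reflection principles, conservativity, soundness -/

/-- The Γ local reflection principle for the predicate with instances `Pr`. -/
def Rfn (Pr : LA.Sentence → LA.Sentence) (Γ : Set LA.Sentence) : LA.Theory :=
  { s | ∃ φ ∈ Γ, s = Pr φ ⟹ φ }

/-- The full local reflection principle `⋃_{n ≥ 1} Rfn_{Σ_n}`. -/
def RfnAll (Pr : LA.Sentence → LA.Sentence) : LA.Theory :=
  { s | ∃ n, 1 ≤ n ∧ ∃ φ ∈ SigmaClass n, s = Pr φ ⟹ φ }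

/-- `S` is Γ-conservative over `U`. -/
def ConservOver (Γ : Set LA.Sentence) (S U : LA.Theory) : Prop :=
  ∀ φ ∈ Γ, Prv S φ → Prv U φ

/-- `T` is Σ₁-sound. -/
def Sigma1Sound (T : LA.Theory) : Prop :=
  ∀ φ ∈ SigmaClass 1, Prv T φ → ℕ ⊨ φ

/-- `U ⊢ S` : every axiom of the theory `S` is provable in `U`. -/
def ProvesTheory (U S : LA.Theory) : Prop := ∀ φ ∈ S, Prv U φ

/-- `Γ(T) := {φ | T ⊢ φ ↔ ψ for some ψ ∈ Γ}`. -/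
def GammaT (T : LA.Theory) (Γ : Set LA.Sentence) : Set LA.Sentence :=
  { φ | ∃ ψ ∈ Γ, Prv T (φ ⇔ ψ) }

/-!
By compactness, a `Γ`-sentence `γ` provable in `T + Rfn(Pr)` follows from `T` and finitely many
instances `Pr(φ) → φ`, `φ ∈ l`. Fix a model `N` of `T + Rfn_Γ(Pr)` and split `l` into the
sentences `S` whose `Pr` holds in `N` and the rest `c`. `T` proves `⋀ S → γ ∨ ⋁_{ψ ∈ c} Pr(ψ)`:
if no `Pr(ψ)`, `ψ ∈ c`, holds, all the reflection instances hold. Taking a `Γ`-sentence `κ` that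
`T` proves equivalent to the disjunction (closure of `Γ(T)` under `∨`), D1 and D2 give
`N ⊨ Pr(κ)`, reflection gives `N ⊨ κ`, and since no `Pr(ψ)` with `ψ ∈ c` holds in `N`, `N ⊨ γ`.
-/

section Provability

lemma prv_iff {U : LA.Theory} {σ : LA.Sentence} :
    Prv U σ ↔ ∀ (N : Type) [LA.Structure N] [Nonempty N], N ⊨ U → N ⊨ σ :=
  ⟨fun h N _ _ hN => have := hN; Theory.ModelsBoundedFormula.realize_sentence h N,
    fun h => Theory.models_sentence_iff.mpr fun M => h M M.is_model⟩

lemma Prv.realize {U : LA.Theory} {σ : LA.Sentence} (h : Prv U σ) (N : Type) [LA.Structure N]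
    [Nonempty N] (hN : N ⊨ U) : N ⊨ σ :=
  prv_iff.mp h N hN

lemma Prv.mono {U U' : LA.Theory} {σ : LA.Sentence} (h : Prv U σ) (hU : U ⊆ U') : Prv U' σ :=
  prv_iff.mpr fun N _ _ hN => h.realize N (hN.mono hU)

end Provability

section ArithmeticOps

variable {N : Type} [LA.Structure N]

variable (N) in
def arithZero : N := Structure.funMap (L := LA) ArithFunc.zero ![]

def arithSucc (a : N) : N := Structure.funMap (L := LA) ArithFunc.succ ![a]

def arithAdd (a b : N) : N := Structure.funMap (L := LA) ArithFunc.add ![a, b]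

def arithMul (a b : N) : N := Structure.funMap (L := LA) ArithFunc.mul ![a, b]

def arithLe (a b : N) : Prop := Structure.RelMap (L := LA) ArithRel.le ![a, b]

@[simp] lemma realize_zeroT {α : Type} (v : α → N) :
    (zeroT : LA.Term α).realize v = arithZero N := by
  rw [zeroT, Term.realize_constants]
  exact congrArg (Structure.funMap (L := LA) ArithFunc.zero) (Subsingleton.elim _ _)

@[simp] lemma realize_sT {α : Type} (v : α → N) (t : LA.Term α) :
    (sT t).realize v = arithSucc (t.realize v) := by
  rw [sT, Term.realize_functions_apply₁]; rfl

@[simp] lemma realize_addT {α : Type} (v : α → N) (t u : LA.Term α) :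
    (addT t u).realize v = arithAdd (t.realize v) (u.realize v) := by
  rw [addT, Term.realize_functions_apply₂]; rfl

@[simp] lemma realize_mulT {α : Type} (v : α → N) (t u : LA.Term α) :
    (mulT t u).realize v = arithMul (t.realize v) (u.realize v) := by
  rw [mulT, Term.realize_functions_apply₂]; rfl

@[simp] lemma realize_leF {α : Type} {n : ℕ} (v : α → N) (xs : Fin n → N)
    (t u : LA.Term (α ⊕ Fin n)) :
    (leF t u).Realize v xs ↔ arithLe (t.realize (Sum.elim v xs)) (u.realize (Sum.elim v xs)) := by
  rw [leF, BoundedFormula.realize_rel₂]; rfl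

end ArithmeticOps

section Substitution

variable {N : Type} [LA.Structure N]

lemma realize_substLastK {k : ℕ} (φ : LA.BoundedFormula Empty (k + 1))
    (t : LA.Term (Empty ⊕ Fin k)) (v : Empty → N) (xs : Fin k → N) :
    (substLastK φ t).Realize v xs ↔ φ.Realize v (Fin.snoc xs (t.realize (Sum.elim v xs))) := by
  rw [substLastK, BoundedFormula.realize_relabel, BoundedFormula.realize_subst,
    show xs ∘ Fin.natAdd k = (default : Fin 0 → N) from Subsingleton.elim _ _]
  refine (BoundedFormula.realize_toFormula φ _).trans (iff_of_eq (congrArg₂ _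
    (funext fun e => e.elim) (funext fun j => ?_)))
  refine Fin.lastCases ?_ (fun i => ?_) j
  · simp
  · simp [Fin.snoc_castSucc]

lemma realize_substLastS {k : ℕ} (φ : LA.BoundedFormula Empty (k + 1))
    (t : LA.Term (Empty ⊕ Fin (k + 1))) (v : Empty → N) (xs : Fin (k + 1) → N) :
    (substLastS φ t).Realize v xs ↔
      φ.Realize v (Fin.snoc (xs ∘ Fin.castSucc) (t.realize (Sum.elim v xs))) := by
  rw [substLastS, BoundedFormula.realize_relabel, BoundedFormula.realize_subst,
    show xs ∘ Fin.natAdd (k + 1) = (default : Fin 0 → N) from Subsingleton.elim _ _]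
  refine (BoundedFormula.realize_toFormula φ _).trans (iff_of_eq (congrArg₂ _
    (funext fun e => e.elim) (funext fun j => ?_)))
  refine Fin.lastCases ?_ (fun i => ?_) j
  · simp
  · simp [Fin.snoc_castSucc]

end Substitution

section PeanoModel

variable {N : Type} [LA.Structure N] [PAAxioms.Model N]

lemma realize_of_mem_PABase {σ : LA.Sentence} (h : σ ∈ PABase) : N ⊨ σ :=
  Theory.realize_sentence_of_mem PAAxioms (Set.mem_union_left _ h)

lemma arithSucc_ne_arithZero (a : N) : arithSucc a ≠ arithZero N := by
  simpa [Sentence.Realize, Formula.Realize, Fin.snoc] using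
    realize_of_mem_PABase (N := N) (σ := ∀' ∼(sT &0 =' zeroT)) (by simp [PABase]) a

lemma arithSucc_injective : Function.Injective (arithSucc : N → N) := fun a b => by
  simpa [Sentence.Realize, Formula.Realize, Fin.snoc] using
    realize_of_mem_PABase (N := N) (σ := ∀' ∀' ((sT &0 =' sT &1) ⟹ (&0 =' &1)))
      (by simp [PABase]) a b

lemma arithAdd_arithZero (a : N) : arithAdd a (arithZero N) = a := by
  simpa [Sentence.Realize, Formula.Realize, Fin.snoc] using
    realize_of_mem_PABase (N := N) (σ := ∀' (addT &0 zeroT =' &0)) (by simp [PABase]) a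

lemma arithAdd_arithSucc (a b : N) : arithAdd a (arithSucc b) = arithSucc (arithAdd a b) := by
  simpa [Sentence.Realize, Formula.Realize, Fin.snoc] using
    realize_of_mem_PABase (N := N) (σ := ∀' ∀' (addT &0 (sT &1) =' sT (addT &0 &1)))
      (by simp [PABase]) a b

lemma arithMul_arithZero (a : N) : arithMul a (arithZero N) = arithZero N := by
  simpa [Sentence.Realize, Formula.Realize, Fin.snoc] using
    realize_of_mem_PABase (N := N) (σ := ∀' (mulT &0 zeroT =' zeroT)) (by simp [PABase]) a

lemma arithMul_arithSucc (a b : N) : arithMul a (arithSucc b) = arithAdd (arithMul a b) a := by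
  simpa [Sentence.Realize, Formula.Realize, Fin.snoc] using
    realize_of_mem_PABase (N := N) (σ := ∀' ∀' (mulT &0 (sT &1) =' addT (mulT &0 &1) &0))
      (by simp [PABase]) a b

lemma arithLe_iff_exists_arithAdd (a b : N) : arithLe a b ↔ ∃ z, arithAdd z a = b := by
  simpa [Sentence.Realize, Formula.Realize, Fin.snoc] using
    realize_of_mem_PABase (N := N) (σ := ∀' ∀' (leF &0 &1 ⇔ ∃' (addT &2 &0 =' &1)))
      (by simp [PABase]) a b

lemma eq_arithZero_or_exists_eq_arithSucc (a : N) : a = arithZero N ∨ ∃ b, a = arithSucc b := by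
  let φ : LA.BoundedFormula Empty 1 := (&0 =' zeroT) ⊔ ∃' (&0 =' sT &1)
  have hind : N ⊨ indAx 0 φ := Theory.realize_sentence_of_mem PAAxioms
    (Set.mem_union_right _ ⟨0, φ, rfl⟩)
  simp only [indAx, BoundedFormula.alls, Sentence.Realize, Formula.Realize,
    BoundedFormula.realize_imp, BoundedFormula.realize_inf, BoundedFormula.realize_all,
    realize_substLastK, realize_substLastS] at hind
  simpa [φ, Fin.snoc] using hind ⟨by simp [φ, Fin.snoc], fun b _ => by simp [φ, Fin.snoc]⟩ a

lemma eq_arithZero_of_arithAdd_eq_arithZero {z a : N} (h : arithAdd z a = arithZero N) :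
    a = arithZero N := by
  rcases eq_arithZero_or_exists_eq_arithSucc a with ha | ⟨b, rfl⟩
  · exact ha
  · exact absurd (arithAdd_arithSucc z b ▸ h) (arithSucc_ne_arithZero _)

end PeanoModel

section StandardNumbers

variable {N : Type} [LA.Structure N]

def natEmb : ℕ → N
  | 0 => arithZero N
  | n + 1 => arithSucc (natEmb n)

@[simp] lemma realize_numeral {α : Type} (v : α → N) (n : ℕ) :
    (numeral n : LA.Term α).realize v = natEmb n := by
  induction n with
  | zero => simp [numeral, natEmb]
  | succ n ih => rw [numeral, realize_sT, ih, natEmb]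

@[simp] lemma natEmb_nat (n : ℕ) : (natEmb n : ℕ) = n := by
  induction n with
  | zero => rfl
  | succ n ih => rw [natEmb, ih]; rfl

variable [PAAxioms.Model N]

lemma natEmb_add (m n : ℕ) : (natEmb (m + n) : N) = arithAdd (natEmb m) (natEmb n) := by
  induction n with
  | zero => exact (arithAdd_arithZero _).symm
  | succ n ih => rw [← add_assoc, natEmb, natEmb, arithAdd_arithSucc, ih]

lemma natEmb_mul (m n : ℕ) : (natEmb (m * n) : N) = arithMul (natEmb m) (natEmb n) := by
  induction n with
  | zero => exact (arithMul_arithZero _).symm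
  | succ n ih => rw [Nat.mul_succ, natEmb, arithMul_arithSucc, natEmb_add, ih]

lemma natEmb_injective : Function.Injective (natEmb : ℕ → N) := by
  intro m n h
  induction m generalizing n with
  | zero => cases n with
    | zero => rfl
    | succ n => exact absurd h.symm (arithSucc_ne_arithZero _)
  | succ m ih => cases n with
    | zero => exact absurd h (arithSucc_ne_arithZero _)
    | succ n => rw [ih (arithSucc_injective h)]

lemma exists_natEmb_eq_of_arithLe {a : N} {n : ℕ} (h : arithLe a (natEmb n)) :
    ∃ m ≤ n, natEmb m = a := by
  obtain ⟨z, hz⟩ := (arithLe_iff_exists_arithAdd _ _).mp h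
  induction n generalizing a with
  | zero => exact ⟨0, le_rfl, (eq_arithZero_of_arithAdd_eq_arithZero hz).symm⟩
  | succ n ih =>
    rcases eq_arithZero_or_exists_eq_arithSucc a with rfl | ⟨b, rfl⟩
    · exact ⟨0, Nat.zero_le _, rfl⟩
    · have hb : arithAdd z b = natEmb n :=
        arithSucc_injective (by rw [← arithAdd_arithSucc, hz, natEmb])
      obtain ⟨m, hm, rfl⟩ := ih ((arithLe_iff_exists_arithAdd _ _).mpr ⟨z, hb⟩) hb
      exact ⟨m + 1, Nat.succ_le_succ hm, rfl⟩

lemma arithLe_natEmb_iff {m n : ℕ} : arithLe (natEmb m : N) (natEmb n) ↔ m ≤ n := by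
  refine ⟨fun h => ?_, fun h => (arithLe_iff_exists_arithAdd _ _).mpr ⟨natEmb (n - m), ?_⟩⟩
  · obtain ⟨_, _, he⟩ := exists_natEmb_eq_of_arithLe h
    rwa [← natEmb_injective he]
  · rw [← natEmb_add, Nat.sub_add_cancel h]

variable (N) in
def stdEmbedding : ℕ ↪[LA] N where
  toFun := natEmb
  inj' := natEmb_injective (N := N)
  map_fun' {_} f x := by
    cases f with
    | zero => exact congrArg (Structure.funMap (L := LA) ArithFunc.zero) (Subsingleton.elim _ _)
    | succ =>
      refine congrArg (Structure.funMap (L := LA) ArithFunc.succ) (funext fun i => ?_)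
      fin_cases i; rfl
    | add =>
      refine (natEmb_add _ _).trans (congrArg (Structure.funMap (L := LA) ArithFunc.add)
        (funext fun i => ?_))
      fin_cases i <;> rfl
    | mul =>
      refine (natEmb_mul _ _).trans (congrArg (Structure.funMap (L := LA) ArithFunc.mul)
        (funext fun i => ?_))
      fin_cases i <;> rfl
  map_rel' {_} r x := by
    cases r
    refine Iff.trans ?_ (arithLe_natEmb_iff (N := N) (m := x 0) (n := x 1))
    exact iff_of_eq (congrArg (Structure.RelMap (L := LA) ArithRel.le) (funext fun i => by
      fin_cases i <;> rfl))

@[simp] lemma coe_stdEmbedding : ⇑(stdEmbedding N) = natEmb := rfl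

end StandardNumbers

section EndEmbedding

variable {M N : Type} [LA.Structure M] [LA.Structure N]

def IsEndEmbedding (f : M ↪[LA] N) : Prop :=
  ∀ (a : M) (b : N), arithLe b (f a) → b ∈ Set.range f

lemma map_arithLe_iff (f : M ↪[LA] N) (a b : M) : arithLe (f a) (f b) ↔ arithLe a b := by
  have h := f.map_rel ArithRel.le ![a, b]
  rwa [show f ∘ ![a, b] = ![f a, f b] from funext fun i => by fin_cases i <;> rfl] at h

lemma realize_leF_last_bound {α : Type} {n : ℕ} (t : LA.Term (α ⊕ Fin n)) (v : α → N)
    (xs : Fin n → N) (c : N) :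
    (leF (Term.var (Sum.inr (Fin.last n))) (t.relabel (Sum.map id Fin.castSucc))).Realize v
      (Fin.snoc xs c) ↔ arithLe c (t.realize (Sum.elim v xs)) := by
  simp [realize_leF, Term.realize_relabel, Sum.elim_comp_map, Fin.snoc_comp_castSucc]

variable {f : M ↪[LA] N} (hf : IsEndEmbedding f)
include hf

theorem IsDelta0.realize_embedding {α : Type} {n : ℕ} {φ : LA.BoundedFormula α n}
    (hφ : IsDelta0 φ) {v : α → M} {xs : Fin n → M} :
    φ.Realize (f ∘ v) (f ∘ xs) ↔ φ.Realize v xs := by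
  induction hφ with
  | falsum => rfl
  | equal t u =>
    simp only [BoundedFormula.realize_bdEqual, ← Sum.comp_elim, HomClass.realize_term,
      f.injective.eq_iff]
  | rel R ts =>
    simp only [BoundedFormula.realize_rel, ← Sum.comp_elim, HomClass.realize_term]
    exact StrongHomClass.map_rel f R _
  | not _ ih => simp only [BoundedFormula.realize_not, ih]
  | and _ _ ih₁ ih₂ => simp only [BoundedFormula.realize_inf, ih₁, ih₂]
  | or _ _ ih₁ ih₂ => simp only [BoundedFormula.realize_sup, ih₁, ih₂]
  | imp _ _ ih₁ ih₂ => simp only [BoundedFormula.realize_imp, ih₁, ih₂]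
  | bdAll t _ ih =>
    simp only [BoundedFormula.realize_all, BoundedFormula.realize_imp, realize_leF_last_bound,
      ← Sum.comp_elim, HomClass.realize_term]
    constructor
    · intro h a ha
      rw [← ih, Fin.comp_snoc]
      exact h (f a) ((map_arithLe_iff f _ _).mpr ha)
    · intro h c hc
      obtain ⟨a, rfl⟩ := hf _ c hc
      rw [← Fin.comp_snoc, ih]
      exact h a ((map_arithLe_iff f _ _).mp hc)
  | bdEx t _ ih =>
    simp only [BoundedFormula.realize_ex, BoundedFormula.realize_inf, realize_leF_last_bound,
      ← Sum.comp_elim, HomClass.realize_term]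
    constructor
    · rintro ⟨c, hc, hφ⟩
      obtain ⟨a, rfl⟩ := hf _ c hc
      rw [← Fin.comp_snoc, ih] at hφ
      exact ⟨a, (map_arithLe_iff f _ _).mp hc, hφ⟩
    · rintro ⟨a, ha, hφ⟩
      refine ⟨f a, (map_arithLe_iff f _ _).mpr ha, ?_⟩
      rwa [← Fin.comp_snoc, ih]

mutual

theorem IsSigma.realize_embedding {α : Type} : ∀ {k n : ℕ} {φ : LA.BoundedFormula α n},
    IsSigma k φ → k ≤ 1 → ∀ {v : α → M} {xs : Fin n → M},
      φ.Realize v xs → φ.Realize (f ∘ v) (f ∘ xs)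
  | _, _, _, .delta0 h, _, _, _ => (h.realize_embedding hf).mpr
  | _, _, _, .ofSigma h, hk, _, _ => h.realize_embedding (by omega)
  | _, _, _, .ofPi (.delta0 h), _, _, _ => (h.realize_embedding hf).mpr
  | _, _, _, .ofPi (k := _ + 1) _, hk, _, _ => by omega
  | _, _, _, .and h₁ h₂, hk, _, _ => by
      simpa only [BoundedFormula.realize_inf] using
        And.imp (h₁.realize_embedding hk) (h₂.realize_embedding hk)
  | _, _, _, .or h₁ h₂, hk, _, _ => by
      simpa only [BoundedFormula.realize_sup] using
        Or.imp (h₁.realize_embedding hk) (h₂.realize_embedding hk)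
  | _, _, _, .ex h, hk, _, xs => fun hex => by
      obtain ⟨a, ha⟩ := BoundedFormula.realize_ex.mp hex
      exact BoundedFormula.realize_ex.mpr ⟨f a, Fin.comp_snoc f xs a ▸ h.realize_embedding hk ha⟩
  | _, _, _, .not h, hk, _, _ => mt (h.realize_embedding hk)
  | _, _, _, .imp h₁ h₂, hk, _, _ => fun himp hφ =>
      h₂.realize_embedding hk (himp (h₁.realize_embedding hk hφ))

theorem IsPi.realize_embedding {α : Type} : ∀ {k n : ℕ} {φ : LA.BoundedFormula α n},
    IsPi k φ → k ≤ 1 → ∀ {v : α → M} {xs : Fin n → M},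
      φ.Realize (f ∘ v) (f ∘ xs) → φ.Realize v xs
  | _, _, _, .delta0 h, _, _, _ => (h.realize_embedding hf).mp
  | _, _, _, .ofSigma (.delta0 h), _, _, _ => (h.realize_embedding hf).mp
  | _, _, _, .ofSigma (k := _ + 1) _, hk, _, _ => by omega
  | _, _, _, .ofPi h, hk, _, _ => h.realize_embedding (by omega)
  | _, _, _, .and h₁ h₂, hk, _, _ => by
      simpa only [BoundedFormula.realize_inf] using
        And.imp (h₁.realize_embedding hk) (h₂.realize_embedding hk)
  | _, _, _, .or h₁ h₂, hk, _, _ => by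
      simpa only [BoundedFormula.realize_sup] using
        Or.imp (h₁.realize_embedding hk) (h₂.realize_embedding hk)
  | _, _, _, .all h, hk, _, xs => fun hall a =>
      h.realize_embedding hk (Fin.comp_snoc f xs a ▸ hall (f a))
  | _, _, _, .not h, hk, _, _ => mt (h.realize_embedding hk)
  | _, _, _, .imp h₁ h₂, hk, _, _ => fun himp hφ =>
      h₂.realize_embedding hk (himp (h₁.realize_embedding hk hφ))

end

end EndEmbedding

lemma isEndEmbedding_stdEmbedding (N : Type) [LA.Structure N] [PAAxioms.Model N] :
    IsEndEmbedding (stdEmbedding N) := fun _ _ h =>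
  let ⟨m, _, hm⟩ := exists_natEmb_eq_of_arithLe h
  ⟨m, hm⟩

lemma realize_provInst {N : Type} [LA.Structure N] (P : LA.Formula (Fin 2)) (c : ℕ) :
    N ⊨ ProvInst P c ↔ ∃ a : N, P.Realize ![natEmb c, a] := by
  refine BoundedFormula.realize_ex.trans (exists_congr fun a => ?_)
  rw [PrfInst, instF, BoundedFormula.realize_relabel, BoundedFormula.realize_subst]
  refine iff_of_eq (congrArg₂ _ (funext fun i => ?_) (Subsingleton.elim _ _))
  fin_cases i <;> simp [Fin.snoc]

/-- A proof found in `ℕ` remains a proof in every model of `T`: `Prf` is `Σ₁` and every model of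
PA end-extends `ℕ`. -/
theorem IsProofPredicate.prv_provS {T : LA.Theory} {Prf : LA.Formula (Fin 2)}
    (hPrf : IsProofPredicate T Prf) (hT : PAAxioms ⊆ T) {φ : LA.Sentence} (h : Prv T φ) :
    Prv T (ProvS Prf φ) := by
  obtain ⟨p, hp⟩ := (realize_provInst Prf _).mp ((hPrf.represents φ).mp h)
  refine prv_iff.mpr fun N _ _ hN => (realize_provInst Prf _).mpr ⟨natEmb p, ?_⟩
  have : N ⊨ PAAxioms := hN.mono hT
  have hstd := hPrf.sigma1.realize_embedding (isEndEmbedding_stdEmbedding N) le_rfl hp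
  refine (iff_of_eq (congrArg₂ _ (funext fun i => ?_) (Subsingleton.elim _ _))).mp hstd
  fin_cases i <;> simp

section FiniteConnectives

variable {N : Type} [LA.Structure N]

lemma realize_foldr_imp (S : List LA.Sentence) (φ : LA.Sentence) :
    N ⊨ S.foldr (· ⟹ ·) φ ↔ ((∀ ψ ∈ S, N ⊨ ψ) → N ⊨ φ) := by
  induction S with
  | nil => simp
  | cons ψ S ih =>
    rw [List.foldr_cons, Sentence.realize_imp, ih, List.forall_mem_cons, and_imp]

lemma realize_foldr_sup (l : List LA.Sentence) (γ : LA.Sentence) :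
    N ⊨ l.foldr (· ⊔ ·) γ ↔ N ⊨ γ ∨ ∃ ψ ∈ l, N ⊨ ψ := by
  induction l with
  | nil => simp
  | cons ψ l ih =>
    simp only [List.foldr_cons, Sentence.realize_sup, ih, List.mem_cons, exists_eq_or_imp]
    tauto

end FiniteConnectives

lemma foldr_sup_mem_gammaT {U : LA.Theory} {Γ : Set LA.Sentence}
    (hdisj : ∀ φ ψ, φ ∈ GammaT U Γ → ψ ∈ GammaT U Γ → (φ ⊔ ψ) ∈ GammaT U Γ)
    {l : List LA.Sentence} (hl : ∀ ψ ∈ l, ψ ∈ GammaT U Γ) {γ : LA.Sentence}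
    (hγ : γ ∈ GammaT U Γ) : l.foldr (· ⊔ ·) γ ∈ GammaT U Γ := by
  induction l with
  | nil => exact hγ
  | cons ψ l ih =>
    rw [List.forall_mem_cons] at hl
    exact hdisj _ _ hl.1 (ih hl.2)

lemma mem_gammaT_of_mem {U : LA.Theory} {Γ : Set LA.Sentence} {γ : LA.Sentence} (hγ : γ ∈ Γ) :
    γ ∈ GammaT U Γ :=
  ⟨γ, hγ, prv_iff.mpr fun _ _ _ _ => (Sentence.realize_iff _).mpr Iff.rfl⟩

section Reflection

variable {U : LA.Theory} {Pr : LA.Sentence → LA.Sentence}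

lemma realize_pr_of_realize_pr_foldr_imp
    (hD2 : ∀ φ ψ, Prv U (Pr (φ ⟹ ψ) ⟹ (Pr φ ⟹ Pr ψ)))
    {N : Type} [LA.Structure N] [Nonempty N] (hN : N ⊨ U) {S : List LA.Sentence}
    (hS : ∀ ψ ∈ S, N ⊨ Pr ψ) {φ : LA.Sentence} (h : N ⊨ Pr (S.foldr (· ⟹ ·) φ)) :
    N ⊨ Pr φ := by
  induction S with
  | nil => exact h
  | cons ψ S ih =>
    rw [List.forall_mem_cons] at hS
    have hD2ψ := (Sentence.realize_imp _).mp ((hD2 ψ _).realize N hN) h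
    exact ih hS.2 ((Sentence.realize_imp _).mp hD2ψ hS.1)

lemma prv_foldr_imp_of_prv_rfn {l S c : List LA.Sentence} (hlSc : ∀ φ ∈ l, φ ∈ S ∨ φ ∈ c)
    {γ : LA.Sentence} (hγ : Prv (U ∪ Rfn Pr {φ | φ ∈ l}) γ) {κ : LA.Sentence}
    (hκ : Prv U ((c.map Pr).foldr (· ⊔ ·) γ ⇔ κ)) : Prv U (S.foldr (· ⟹ ·) κ) := by
  refine prv_iff.mpr fun M _ _ hM => (realize_foldr_imp S κ).mpr fun hS => ?_
  refine (Sentence.realize_iff _).mp (hκ.realize M hM) |>.mp ((realize_foldr_sup _ _).mpr ?_)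
  by_cases hc : ∃ ψ ∈ c.map Pr, M ⊨ ψ
  · exact Or.inr hc
  refine Or.inl (hγ.realize M ((Theory.model_iff _).mpr ?_))
  rintro σ (hσ | ⟨φ, hφ, rfl⟩)
  · exact Theory.realize_sentence_of_mem U hσ
  refine (Sentence.realize_imp _).mpr fun hPr => ?_
  rcases hlSc φ hφ with hφS | hφc
  · exact hS φ hφS
  · exact absurd ⟨Pr φ, List.mem_map_of_mem hφc, hPr⟩ hc

lemma exists_list_prv_union_rfn {A : Set LA.Sentence} {γ : LA.Sentence}
    (h : Prv (U ∪ Rfn Pr A) γ) : ∃ l : List LA.Sentence, Prv (U ∪ Rfn Pr {φ | φ ∈ l}) γ := by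
  obtain ⟨T₀, hT₀, hγ⟩ := Theory.models_iff_finset_models.mp h
  have hfin : {φ | (Pr φ ⟹ φ) ∈ T₀}.Finite :=
    T₀.finite_toSet.preimage fun _ _ _ _ h => (BoundedFormula.imp.inj h).2
  refine ⟨hfin.toFinset.toList, Prv.mono hγ fun σ hσ => ?_⟩
  rcases hT₀ hσ with hσU | ⟨φ, -, rfl⟩
  · exact Or.inl hσU
  · exact Or.inr ⟨φ, by simpa using hσ, rfl⟩

variable {Γ : Set LA.Sentence}
  (hD1 : ∀ φ, Prv U φ → Prv U (Pr φ))
  (hD2 : ∀ φ ψ, Prv U (Pr (φ ⟹ ψ) ⟹ (Pr φ ⟹ Pr ψ)))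
  (hPrΓ : ∀ φ, Pr φ ∈ GammaT U Γ)
  (hdisj : ∀ φ ψ, φ ∈ GammaT U Γ → ψ ∈ GammaT U Γ → (φ ⊔ ψ) ∈ GammaT U Γ)
include hD1 hD2 hPrΓ hdisj

lemma prv_union_rfn_of_prv_union_rfn_list {l : List LA.Sentence} {γ : LA.Sentence} (hγΓ : γ ∈ Γ)
    (hγ : Prv (U ∪ Rfn Pr {φ | φ ∈ l}) γ) : Prv (U ∪ Rfn Pr Γ) γ := by
  classical
  refine prv_iff.mpr fun N _ _ hN => ?_
  have hNU : N ⊨ U := hN.mono Set.subset_union_left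
  set S := l.filter (fun φ => N ⊨ Pr φ)
  set c := l.filter (fun φ => ¬ N ⊨ Pr φ)
  have hlSc : ∀ φ ∈ l, φ ∈ S ∨ φ ∈ c := fun φ hφ => by
    by_cases h : N ⊨ Pr φ <;> simp [S, c, hφ, h]
  obtain ⟨κ, hκΓ, hκ⟩ := foldr_sup_mem_gammaT hdisj (l := c.map Pr)
    (by simpa using fun ψ _ => hPrΓ ψ) (mem_gammaT_of_mem hγΓ)
  have hPrκ : N ⊨ Pr κ :=
    realize_pr_of_realize_pr_foldr_imp hD2 hNU (by simp [S])
      ((hD1 _ (prv_foldr_imp_of_prv_rfn hlSc hγ hκ)).realize N hNU)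
  have hκN : N ⊨ κ := (Sentence.realize_imp _).mp
    (Theory.realize_sentence_of_mem (U ∪ Rfn Pr Γ) (Or.inr ⟨κ, hκΓ, rfl⟩)) hPrκ
  rcases (realize_foldr_sup _ _).mp (((Sentence.realize_iff _).mp (hκ.realize N hNU)).mpr hκN)
    with hγN | ⟨_, hψ, hPrψ⟩
  · exact hγN
  · obtain ⟨ψ, hψc, rfl⟩ := List.mem_map.mp hψ
    exact absurd hPrψ (of_decide_eq_true (List.mem_filter.mp hψc).2)

theorem conservOver_union_rfn (A : Set LA.Sentence) :
    ConservOver Γ (U ∪ Rfn Pr A) (U ∪ Rfn Pr Γ) := fun _ hγΓ hγ =>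
  let ⟨_, hl⟩ := exists_list_prv_union_rfn hγ
  prv_union_rfn_of_prv_union_rfn_list hD1 hD2 hPrΓ hdisj hγΓ hl

end Reflection

lemma rfnAll_eq_rfn (Pr : LA.Sentence → LA.Sentence) :
    RfnAll Pr = Rfn Pr {φ | ∃ n, 1 ≤ n ∧ φ ∈ SigmaClass n} := by
  ext σ
  constructor
  · rintro ⟨n, hn, φ, hφ, rfl⟩
    exact ⟨φ, ⟨n, hn, hφ⟩, rfl⟩
  · rintro ⟨φ, ⟨n, hn, hφ⟩, rfl⟩
    exact ⟨n, hn, φ, hφ, rfl⟩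

theorem generalized_conservation_theorem
    (T : LA.Theory) (hT : PAAxioms ⊆ T) (hcons : ¬ Prv T (⊥ : LA.Sentence))
    (Prf : LA.Formula (Fin 2)) (hPrf : IsProofPredicate T Prf)
    (hD2 : CondD2 T (PrAt Prf))
    (Θ Γ : Set LA.Sentence)
    (hΘ : ∀ φ : LA.Sentence, ProvS Prf φ ∈ GammaT T Θ)
    (hΘΓ : GammaT T Θ ⊆ GammaT T Γ)
    (hdisj : ∀ φ ψ : LA.Sentence, φ ∈ GammaT T Γ → ψ ∈ GammaT T Γ → (φ ⊔ ψ) ∈ GammaT T Γ) :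
    ConservOver Γ (T ∪ RfnAll (ProvS Prf)) (T ∪ Rfn (ProvS Prf) Γ) := by
  rw [rfnAll_eq_rfn]
  exact conservOver_union_rfn (fun _ => hPrf.prv_provS hT) (hD2 0) (fun φ => hΘΓ (hΘ φ)) hdisj _
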